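/- There exist absolute constants k₀ > 0 and K > 1 such that the following holds. Fix N ≥ 2, an N-ary tree V of depth L ≥ 1, and radially decaying weights with parameter ε ≤ k₀/N. Then for every non-leaf cluster C ∈ 𝒞 \ ∂𝒞, K^{−1}·N^{−1}·W_C ≤ diam(C) ≤ K·W_C; moreover W_C = x_C⁽²⁾ for every leaf cluster C = {x_C} ∈ ∂𝒞. -/

import Mathlib

open MeasureTheory Set Metric
open scoped Classical

noncomputable section

abbrev Pt : Type := EuclideanSpace ℝ (Fin 2)

/-- The point `(a, b)` of the Euclidean plane. -/
def pt (a b : ℝ) : Pt := WithLp.toLp 2 ![a, b]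

/-- `V` is an `N`-ary tree: a finite prefix-closed set of strings over the alphabet
`{0, …, N−1}` containing the empty string (the root), in which every non-leaf node
has at least `2` (and, automatically, at most `N`) children. -/
def IsNaryTree (N : ℕ) (V : Finset (List ℕ)) : Prop :=
  [] ∈ V ∧
  (∀ v ∈ V, ∀ u : List ℕ, u <+: v → u ∈ V) ∧
  (∀ v ∈ V, ∀ i ∈ v, i < N) ∧
  (∀ v ∈ V, (∃ a : ℕ, v ++ [a] ∈ V) →
    2 ≤ ((Finset.range N).filter (fun a => v ++ [a] ∈ V)).card)

/-- `v` is a leaf of `V`. -/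
def IsLeaf (V : Finset (List ℕ)) (v : List ℕ) : Prop :=
  v ∈ V ∧ ∀ a : ℕ, v ++ [a] ∉ V

/-- The tree has depth at least one, i.e. the root is not a leaf. -/
def DepthAtLeastOne (V : Finset (List ℕ)) : Prop := ∃ a : ℕ, [a] ∈ V

/-- Radially decaying weights with parameter `ε` (with the convention `W ∅ = 1`). -/
def RadiallyDecaying (V : Finset (List ℕ)) (W : List ℕ → ℝ) (ε : ℝ) : Prop :=
  W [] = 1 ∧ (∀ v ∈ V, 0 < W v) ∧ ∀ v ∈ V, v ≠ [] → W v ≤ ε * W v.dropLast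

/-- The map `Ψ(v) = ∑_{i=1}^{d(v)} W(π_{i−1}(v))·v_i/(N−1)`. -/
def Psi (N : ℕ) (W : List ℕ → ℝ) (v : List ℕ) : ℝ :=
  ∑ i ∈ Finset.range v.length, W (v.take i) * (v.getD i 0 : ℝ) / ((N : ℝ) - 1)

/-- `Δ = min_{v ∈ ∂V} W_v`. -/
def Delta (V : Finset (List ℕ)) (W : List ℕ → ℝ) : ℝ :=
  sInf {w : ℝ | ∃ v, IsLeaf V v ∧ w = W v}

def E1set (Δ : ℝ) : Set Pt :=
  {x | (∃ n : ℤ, x 0 = (n : ℝ) * Δ) ∧ x 0 ∈ Ico (0 : ℝ) 2 ∧ x 1 = 0}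

def E2set (N : ℕ) (V : Finset (List ℕ)) (W : List ℕ → ℝ) : Set Pt :=
  {x | ∃ v, IsLeaf V v ∧ x = pt (Psi N W v) (W v)}

def Eset (N : ℕ) (V : Finset (List ℕ)) (W : List ℕ → ℝ) : Set Pt :=
  E1set (Delta V W) ∪ E2set N V W

/-- Bundle of standing hypotheses: `N ≥ 2`, `V` an `N`-ary tree, `0 < ε ≤ k₀/N`,
and radially decaying weights with parameter `ε`. -/
def TreeHyp (k₀ : ℝ) (N : ℕ) (V : Finset (List ℕ)) (W : List ℕ → ℝ) (ε : ℝ) : Prop :=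
  2 ≤ N ∧ IsNaryTree N V ∧ 0 < ε ∧ ε ≤ k₀ / N ∧ RadiallyDecaying V W ε

/-- Distance between two subsets of the plane. -/
def setDist (s t : Set Pt) : ℝ := sInf {d : ℝ | ∃ x ∈ s, ∃ y ∈ t, d = dist x y}

/-- A dyadic square arising from `Q⁰ = [−3,5)²` by `k` repeated bisections. -/
structure DSquare where
  k : ℕ
  i : ℕ
  j : ℕ
  hi : i < 2 ^ k
  hj : j < 2 ^ k

namespace DSquare

def side (Q : DSquare) : ℝ := 8 / 2 ^ Q.k

def x0 (Q : DSquare) : ℝ := -3 + Q.i * Q.side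

def y0 (Q : DSquare) : ℝ := -3 + Q.j * Q.side

/-- The (half-open) square itself, as a subset of the plane. -/
def set (Q : DSquare) : Set Pt :=
  {x | x 0 ∈ Ico Q.x0 (Q.x0 + Q.side) ∧ x 1 ∈ Ico Q.y0 (Q.y0 + Q.side)}

/-- The concentric dilate `λQ`. -/
def dil (Q : DSquare) (lam : ℝ) : Set Pt :=
  {x | |x 0 - (Q.x0 + Q.side / 2)| ≤ lam * Q.side / 2 ∧
       |x 1 - (Q.y0 + Q.side / 2)| ≤ lam * Q.side / 2}

/-- The dyadic ancestor of `Q` at generation `k' ≤ Q.k`. -/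
def anc (Q : DSquare) (k' : ℕ) (h : k' ≤ Q.k) : DSquare :=
  ⟨k', Q.i / 2 ^ (Q.k - k'), Q.j / 2 ^ (Q.k - k'), by
      have h2 : 0 < 2 ^ (Q.k - k') := pow_pos (by norm_num) _
      rw [Nat.div_lt_iff_lt_mul h2, ← pow_add, Nat.add_sub_cancel' h]
      exact Q.hi, by
      have h2 : 0 < 2 ^ (Q.k - k') := pow_pos (by norm_num) _
      rw [Nat.div_lt_iff_lt_mul h2, ← pow_add, Nat.add_sub_cancel' h]
      exact Q.hj⟩

end DSquare

def Q0set : Set Pt := {x | x 0 ∈ Ico (-3 : ℝ) 5 ∧ x 1 ∈ Ico (-3 : ℝ) 5}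

/-- `Q` belongs to the Whitney decomposition `𝒲` of `Q⁰` relative to `E`:
`3Q ∩ E` has at most one point, while `3Q'' ∩ E` has at least two points for every
proper dyadic ancestor `Q''` of `Q`. -/
def InWhitney (E : Set Pt) (Q : DSquare) : Prop :=
  (Q.dil 3 ∩ E).Subsingleton ∧
  ∀ k' : ℕ, ∀ h : k' < Q.k, ¬ ((Q.anc k' h.le).dil 3 ∩ E).Subsingleton

/-- `Q ↔ Q'`, i.e. `1.1Q ∩ 1.1Q' ≠ ∅`. -/
def Touch (Q Q' : DSquare) : Prop := (Q.dil 1.1 ∩ Q'.dil 1.1).Nonempty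

/-- `‖F‖_{L^{2,p}(Ω)}^p = ∫_Ω |∇²F|^p`. -/
def sobEnergy (p : ℝ) (Ω : Set Pt) (F : Pt → ℝ) : ℝ :=
  ∫ x in Ω, ‖iteratedFDeriv ℝ 2 F x‖ ^ p

/-- The seminorm `‖F‖_{L^{2,p}(Ω)}`. -/
def sobNorm (p : ℝ) (Ω : Set Pt) (F : Pt → ℝ) : ℝ := sobEnergy p Ω F ^ (1 / p)

/-- Membership in the homogeneous Sobolev space `L^{2,p}(ℝ²)` (we work with `C²`
representatives with finite seminorm). -/
def MemSob (p : ℝ) (F : Pt → ℝ) : Prop :=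
  ContDiff ℝ 2 F ∧ Integrable fun x => ‖iteratedFDeriv ℝ 2 F x‖ ^ p

/-- The trace seminorm `‖f‖_{L^{2,p}(E)}` of `f : E → ℝ`. -/
def traceSobNorm (p : ℝ) (E : Set Pt) (f : E → ℝ) : ℝ :=
  sInf {c : ℝ | ∃ F : Pt → ℝ, MemSob p F ∧ (∀ y : E, F y.1 = f y) ∧ c = sobNorm p univ F}

/-- `T` is a linear extension operator `L^{2,p}(E) → L^{2,p}(ℝ²)` with norm bound `M`. -/
def IsExtOpPlane (p : ℝ) (E : Set Pt) (M : ℝ) (T : (E → ℝ) →ₗ[ℝ] (Pt → ℝ)) : Prop :=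
  ∀ f : E → ℝ, (∃ F : Pt → ℝ, MemSob p F ∧ ∀ y : E, F y.1 = f y) →
    MemSob p (T f) ∧ (∀ y : E, T f y.1 = f y) ∧
      sobNorm p univ (T f) ≤ M * traceSobNorm p E f

/-- `‖Φ‖_{L^{1,p}(V)}^p = ∑_{v ∈ V₀} |Φ(v) − Φ(π(v))|^p W_v^{2−p}`. -/
def treeEnergy (p : ℝ) (V : Finset (List ℕ)) (W : List ℕ → ℝ) (Φ : List ℕ → ℝ) : ℝ :=
  ∑ v ∈ V.erase [], |Φ v - Φ v.dropLast| ^ p * W v ^ (2 - p)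

def treeNorm (p : ℝ) (V : Finset (List ℕ)) (W : List ℕ → ℝ) (Φ : List ℕ → ℝ) : ℝ :=
  treeEnergy p V W Φ ^ (1 / p)

/-- The type of leaves of `V`. -/
def Leaves (V : Finset (List ℕ)) : Type := {v : List ℕ // IsLeaf V v}

/-- The trace seminorm `‖φ‖_{L^{1,p}(∂V)}`. -/
def treeTraceNorm (p : ℝ) (V : Finset (List ℕ)) (W : List ℕ → ℝ) (φ : Leaves V → ℝ) : ℝ :=
  sInf {c : ℝ | ∃ Φ : List ℕ → ℝ, (∀ v : Leaves V, Φ v.1 = φ v) ∧ c = treeNorm p V W Φ}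

/-- `H` is a linear extension operator `L^{1,p}(∂V) → L^{1,p}(V)` with norm bound `M`. -/
def IsExtOpTree (p : ℝ) (V : Finset (List ℕ)) (W : List ℕ → ℝ) (M : ℝ)
    (H : (Leaves V → ℝ) →ₗ[ℝ] (List ℕ → ℝ)) : Prop :=
  ∀ φ : Leaves V → ℝ,
    (∀ v : Leaves V, H φ v.1 = φ v) ∧ treeNorm p V W (H φ) ≤ M * treeTraceNorm p V W φ

/-- Longest common prefix of two strings (the lowest common ancestor). -/
def lcp : List ℕ → List ℕ → List ℕ
  | a :: as, b :: bs => if a = b then a :: lcp as bs else []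
  | _, _ => []

/-- The cluster `C_v ⊆ E₂` associated to a vertex `v ∈ V`. -/
def Cluster (N : ℕ) (V : Finset (List ℕ)) (W : List ℕ → ℝ) (v : List ℕ) : Set Pt :=
  {x | ∃ u, IsLeaf V u ∧ v <+: u ∧ x = pt (Psi N W u) (W u)}

/-- The average `(∂₂G)_S` of the vertical derivative of `G` over `S`. -/
def d2avg (S : Set Pt) (G : Pt → ℝ) : ℝ :=
  ⨍ x in S, fderiv ℝ G x (EuclideanSpace.single 1 1)

end

/-! The intervals `[Ψ v, Ψ v + 2 W v]` are nested along the tree as soon as `ε ≤ 1/2`, since the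
step `Ψ (v ++ [a]) - Ψ v = W v · a/(N-1)` is at most `W v`. Hence every point of the cluster
`C_v` has first coordinate in an interval of length `2 W v` and height in `(0, W v]`, which bounds
`diam C_v` by `3 W v`. Conversely, two children `v ++ [a]`, `v ++ [b]` with `a < b` have disjoint
intervals at horizontal distance at least `W v/(N-1) - 2 ε W v ≥ W v/(2N)` when `ε ≤ 1/(4N)`. -/

theorem Psi_append_singleton (N : ℕ) (W : List ℕ → ℝ) (u : List ℕ) (a : ℕ) :
    Psi N W (u ++ [a]) = Psi N W u + W u * a / ((N : ℝ) - 1) := by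
  unfold Psi
  rw [List.length_append, List.length_singleton, Finset.sum_range_succ]
  congr 1
  · refine Finset.sum_congr rfl fun i hi => ?_
    have hi : i < u.length := Finset.mem_range.mp hi
    rw [List.take_append_of_le_length hi.le, List.getD_append _ _ _ _ hi]
  · simp

theorem digit_div_mem_Icc {N a : ℕ} (ha : a < N) : (a : ℝ) / ((N : ℝ) - 1) ∈ Set.Icc 0 1 := by
  have : (a : ℝ) + 1 ≤ N := by exact_mod_cast ha
  have ha₀ := a.cast_nonneg (α := ℝ)
  exact ⟨div_nonneg ha₀ (by linarith), div_le_one_of_le₀ (by linarith) (by linarith)⟩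

theorem dist_pt (a b c d : ℝ) : dist (pt a c) (pt b d) = √((a - b) ^ 2 + (c - d) ^ 2) := by
  simp [EuclideanSpace.dist_eq, Fin.sum_univ_two, pt, Real.dist_eq, sq_abs]

theorem abs_sub_le_dist_pt (a b c d : ℝ) : |a - b| ≤ dist (pt a c) (pt b d) := by
  simpa [pt, Real.dist_eq] using PiLp.dist_apply_le (pt a c) (pt b d) 0

theorem dist_pt_le (a b c d : ℝ) : dist (pt a c) (pt b d) ≤ |a - b| + |c - d| := by
  rw [dist_pt, Real.sqrt_le_left (by positivity)]
  nlinarith [sq_abs (a - b), sq_abs (c - d), abs_nonneg (a - b), abs_nonneg (c - d)]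

section Tree

variable {N : ℕ} {V : Finset (List ℕ)} {W : List ℕ → ℝ} {ε : ℝ}

theorem exists_isLeaf_and_prefix {v : List ℕ} (hv : v ∈ V) :
    ∃ u, IsLeaf V u ∧ v <+: u := by
  obtain ⟨u, hu, hmax⟩ := (V.filter (v <+: ·)).exists_max_image List.length ⟨v, by simp [hv]⟩
  rw [Finset.mem_filter] at hu
  refine ⟨u, ⟨hu.1, fun a ha => ?_⟩, hu.2⟩
  have := hmax (u ++ [a]) (Finset.mem_filter.mpr ⟨ha, hu.2.trans (List.prefix_append u [a])⟩)
  simp at this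

theorem IsNaryTree.cluster_eq_singleton (hT : IsNaryTree N V) {v : List ℕ} (hv : IsLeaf V v) :
    Cluster N V W v = {pt (Psi N W v) (W v)} := by
  refine Set.eq_singleton_iff_unique_mem.mpr ⟨⟨v, hv, List.prefix_refl v, rfl⟩, ?_⟩
  rintro x ⟨u, hu, ⟨t, rfl⟩, rfl⟩
  cases t with
  | nil => simp
  | cons c t => exact absurd (hT.2.1 _ hu.1 _ ⟨t, by simp⟩) (hv.2 c)

theorem cluster_finite (v : List ℕ) : (Cluster N V W v).Finite :=
  (V.finite_toSet.image fun u => pt (Psi N W u) (W u)).subset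
    fun _ ⟨u, hu, _, hx⟩ => ⟨u, hu.1, hx.symm⟩

theorem Psi_le_and_Psi_add_le_of_prefix (hT : IsNaryTree N V) (hRD : RadiallyDecaying V W ε)
    (hε : ε ≤ 1 / 2) {u v : List ℕ} (hu : u ∈ V) (hvu : v <+: u) :
    Psi N W v ≤ Psi N W u ∧ Psi N W u + 2 * W u ≤ Psi N W v + 2 * W v := by
  obtain ⟨t, rfl⟩ := hvu
  induction t using List.reverseRecOn with
  | nil => simp
  | append_singleton t a ih =>
    rw [← List.append_assoc] at hu ⊢
    have hw : v ++ t ∈ V := hT.2.1 _ hu _ (List.prefix_append _ _)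
    have hWw := hRD.2.1 _ hw
    have hdigit := digit_div_mem_Icc (hT.2.2.1 _ hu a (by simp))
    have hstep₀ : 0 ≤ W (v ++ t) * (a / ((N : ℝ) - 1)) := mul_nonneg hWw.le hdigit.1
    have hstep₁ : W (v ++ t) * (a / ((N : ℝ) - 1)) ≤ W (v ++ t) :=
      mul_le_of_le_one_right hWw.le hdigit.2
    have hdecay := hRD.2.2 _ hu (by simp)
    rw [List.dropLast_concat] at hdecay
    rw [Psi_append_singleton, mul_div_assoc]
    obtain ⟨ih₁, ih₂⟩ := ih hw
    constructor <;> nlinarith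

theorem IsNaryTree.exists_children_lt (hT : IsNaryTree N V) {v : List ℕ} (hv : v ∈ V)
    (hint : ∃ a, v ++ [a] ∈ V) : ∃ a b, a < b ∧ b < N ∧ v ++ [a] ∈ V ∧ v ++ [b] ∈ V := by
  obtain ⟨a, ha, b, hb, hab⟩ := Finset.one_lt_card.mp (hT.2.2.2 v hv hint)
  simp only [Finset.mem_filter, Finset.mem_range] at ha hb
  rcases hab.lt_or_gt with h | h
  · exact ⟨a, b, h, hb.1, ha.2, hb.2⟩
  · exact ⟨b, a, h, ha.1, hb.2, ha.2⟩

theorem Psi_bounds_of_child_prefix (hT : IsNaryTree N V) (hRD : RadiallyDecaying V W ε)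
    (hε : ε ≤ 1 / 2) {u v : List ℕ} {c : ℕ} (hu : u ∈ V) (hvu : v ++ [c] <+: u) :
    Psi N W v + W v * c / ((N : ℝ) - 1) ≤ Psi N W u ∧
      Psi N W u ≤ Psi N W v + W v * c / ((N : ℝ) - 1) + 2 * ε * W v := by
  have hc : v ++ [c] ∈ V := hT.2.1 _ hu _ hvu
  have hdecay := hRD.2.2 _ hc (by simp)
  rw [List.dropLast_concat] at hdecay
  have hWu := hRD.2.1 _ hu
  have := Psi_le_and_Psi_add_le_of_prefix hT hRD hε hu hvu
  rw [Psi_append_singleton] at this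
  constructor <;> linarith

theorem diam_cluster_le (hT : IsNaryTree N V) (hRD : RadiallyDecaying V W ε) (hε : ε ≤ 1 / 2)
    {v : List ℕ} (hv : v ∈ V) : Metric.diam (Cluster N V W v) ≤ 3 * W v := by
  have hbounds : ∀ u, IsLeaf V u → v <+: u →
      Psi N W v ≤ Psi N W u ∧ Psi N W u ≤ Psi N W v + 2 * W v ∧ 0 < W u ∧ W u ≤ W v := by
    intro u hu hvu
    have := Psi_le_and_Psi_add_le_of_prefix hT hRD hε hu.1 hvu
    have := hRD.2.1 u hu.1
    exact ⟨by linarith, by linarith, by linarith, by linarith⟩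
  refine Metric.diam_le_of_forall_dist_le (by linarith [hRD.2.1 v hv]) ?_
  rintro _ ⟨u₁, hu₁, hvu₁, rfl⟩ _ ⟨u₂, hu₂, hvu₂, rfl⟩
  obtain ⟨hl₁, hr₁, hW₁, hW₁v⟩ := hbounds u₁ hu₁ hvu₁
  obtain ⟨hl₂, hr₂, hW₂, hW₂v⟩ := hbounds u₂ hu₂ hvu₂
  calc _ ≤ |Psi N W u₁ - Psi N W u₂| + |W u₁ - W u₂| := dist_pt_le _ _ _ _
    _ ≤ 2 * W v + W v := by gcongr <;> exact abs_sub_le_iff.mpr ⟨by linarith, by linarith⟩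
    _ = 3 * W v := by ring

theorem div_le_diam_cluster (hT : IsNaryTree N V) (hRD : RadiallyDecaying V W ε)
    (hε : ε ≤ 1 / (4 * N)) {v : List ℕ} (hv : v ∈ V) (hint : ∃ a, v ++ [a] ∈ V) :
    W v / (2 * N) ≤ Metric.diam (Cluster N V W v) := by
  obtain ⟨a, b, hab, hbN, ha, hb⟩ := hT.exists_children_lt hv hint
  obtain ⟨ua, hua, hpa⟩ := exists_isLeaf_and_prefix ha
  obtain ⟨ub, hub, hpb⟩ := exists_isLeaf_and_prefix hb
  have hWv := hRD.2.1 v hv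
  have hab' : (a : ℝ) + 1 ≤ b := by exact_mod_cast hab
  have hbN' : (b : ℝ) + 1 ≤ N := by exact_mod_cast hbN
  have ha₀ := a.cast_nonneg (α := ℝ)
  have hε₂ : ε ≤ 1 / 2 := hε.trans (by gcongr; linarith)
  have hspread : W v / N ≤ W v * b / ((N : ℝ) - 1) - W v * a / ((N : ℝ) - 1) := by
    rw [← sub_div, ← mul_sub, div_le_div_iff₀ (by linarith) (by linarith)]
    have := le_mul_of_one_le_right hWv.le (by linarith : (1 : ℝ) ≤ b - a)
    nlinarith
  have hdecay : 2 * ε * W v ≤ W v / (2 * N) := by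
    rw [le_div_iff₀ (by linarith)]
    have := (le_div_iff₀ (by linarith)).mp hε
    nlinarith
  have hPa := Psi_bounds_of_child_prefix hT hRD hε₂ hua.1 hpa
  have hPb := Psi_bounds_of_child_prefix hT hRD hε₂ hub.1 hpb
  calc W v / (2 * N) ≤ |Psi N W ub - Psi N W ua| := by
        rw [le_abs]; left
        have : W v / (2 * N) = W v / N - W v / (2 * N) := by field_simp; ring
        linarith
    _ ≤ dist (pt (Psi N W ub) (W ub)) (pt (Psi N W ua) (W ua)) := abs_sub_le_dist_pt _ _ _ _
    _ ≤ Metric.diam (Cluster N V W v) :=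
        Metric.dist_le_diam_of_mem (cluster_finite v).isBounded
          ⟨ub, hub, (List.prefix_append v [b]).trans hpb, rfl⟩
          ⟨ua, hua, (List.prefix_append v [a]).trans hpa, rfl⟩

end Tree

/-- diameter of a non-leaf cluster is comparable to its weight, and
the weight of a leaf cluster is the height of its point. -/
theorem statement11 :
    ∃ k₀ K : ℝ, 0 < k₀ ∧ 1 < K ∧
      ∀ (N : ℕ) (V : Finset (List ℕ)) (W : List ℕ → ℝ) (ε : ℝ),
        TreeHyp k₀ N V W ε → DepthAtLeastOne V →
          (∀ v ∈ V, (∃ a : ℕ, v ++ [a] ∈ V) →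
            K⁻¹ * (N : ℝ)⁻¹ * W v ≤ Metric.diam (Cluster N V W v) ∧
              Metric.diam (Cluster N V W v) ≤ K * W v) ∧
          (∀ v : List ℕ, IsLeaf V v → ∀ x ∈ Cluster N V W v, x 1 = W v) := by
  refine ⟨1 / 4, 3, by norm_num, by norm_num, ?_⟩
  rintro N V W ε ⟨hN, hT, -, hεk, hRD⟩ -
  have hN' : (2 : ℝ) ≤ N := by exact_mod_cast hN
  have hε : ε ≤ 1 / (4 * N) := by rwa [div_div] at hεk
  have hε₂ : ε ≤ 1 / 2 := hε.trans (by gcongr; linarith)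
  refine ⟨fun v hv hint => ⟨?_, diam_cluster_le hT hRD hε₂ hv⟩, fun v hv x hx => ?_⟩
  · calc 3⁻¹ * (N : ℝ)⁻¹ * W v ≤ W v / (2 * N) := by
          rw [div_eq_mul_inv, mul_inv, mul_comm (W v)]
          gcongr
          · exact (hRD.2.1 v hv).le
          · norm_num
      _ ≤ _ := div_le_diam_cluster hT hRD hε hv hint
  · rw [hT.cluster_eq_singleton hv, Set.mem_singleton_iff] at hx
    simp [hx, pt]
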